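/- Let N ≥ 2, 0 < α ≤ β, and let w(y) = y_k f(|y|) with f(r) = b₁ for r < R, f(r) = b₂ + c/r^N for R < r < 1, where b₁, b₂, c satisfy b₁ = b₂ + c/R^N, αb₁ = β(b₂ + (1−N)c/R^N), b₂ + c = 1. Then w ∈ H¹(B(0,1)), w(y) = y_k on the unit sphere, and w solves −div(a(|y|)∇w) = 0 in B(0,1) in the weak sense, where a = α on {r < R} and a = β on {R < r < 1}. -/

import Mathlib

open MeasureTheory Metric Finset

section Aux

variable {E : Type*} [NormedAddCommGroup E] [InnerProductSpace ℝ E]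

lemma norm_hasFDerivAt {x : E} (hx : x ≠ 0) :
    HasFDerivAt (fun y : E => ‖y‖) ((‖x‖⁻¹) • (innerSL ℝ x)) x := by
  have h1 : HasFDerivAt (fun y : E => ‖y‖ ^ 2) (2 • (innerSL ℝ x)) x :=
    (hasStrictFDerivAt_norm_sq x).hasFDerivAt
  have hxn : ‖x‖ ≠ 0 := norm_ne_zero_iff.2 hx
  have h2 : HasDerivAt Real.sqrt (1 / (2 * Real.sqrt (‖x‖ ^ 2))) (‖x‖ ^ 2) :=
    Real.hasDerivAt_sqrt (by positivity)
  have h3 := h2.comp_hasFDerivAt x h1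
  have hfun : (Real.sqrt ∘ fun y : E => ‖y‖ ^ 2) = fun y : E => ‖y‖ :=
    funext fun y => Real.sqrt_sq (norm_nonneg y)
  have hn : Real.sqrt (‖x‖ ^ 2) = ‖x‖ := Real.sqrt_sq (norm_nonneg x)
  have hder : (1 / (2 * Real.sqrt (‖x‖ ^ 2))) • (2 • innerSL ℝ x) = ‖x‖⁻¹ • innerSL ℝ x := by
    ext v
    simp only [ContinuousLinearMap.smul_apply, hn, smul_eq_mul, two_smul,
      ContinuousLinearMap.add_apply]
    field_simp
    ring
  rw [hfun, hder] at h3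
  exact h3

lemma inv_pow_norm_hasFDerivAt (n : ℕ) {x : E} (hx : x ≠ 0) :
    HasFDerivAt (fun y : E => (‖y‖ ^ n)⁻¹)
      ((-(n : ℝ) * (‖x‖ ^ (n + 2))⁻¹) • (innerSL ℝ x)) x := by
  have hxn : ‖x‖ ≠ 0 := norm_ne_zero_iff.2 hx
  have h1 : HasDerivAt (fun t : ℝ => (t ^ n)⁻¹)
      (-(↑n * ‖x‖ ^ (n - 1)) / (‖x‖ ^ n) ^ 2) ‖x‖ :=
    (hasDerivAt_pow n ‖x‖).inv (pow_ne_zero _ hxn)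
  have h2 := h1.comp_hasFDerivAt x (norm_hasFDerivAt hx)
  have hder : (-(↑n * ‖x‖ ^ (n - 1)) / (‖x‖ ^ n) ^ 2) • (‖x‖⁻¹ • innerSL ℝ x)
      = (-(n : ℝ) * (‖x‖ ^ (n + 2))⁻¹) • (innerSL ℝ x) := by
    rw [smul_smul]
    congr 1
    rcases n with _ | m
    · simp
    · have h : (m + 1 : ℕ) - 1 = m := rfl
      rw [h]
      field_simp
      ring
  rw [hder] at h2
  exact h2

lemma coord_abs_le_norm {m : ℕ} (y : EuclideanSpace ℝ (Fin m)) (j : Fin m) : |y j| ≤ ‖y‖ := by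
  rw [EuclideanSpace.norm_eq]
  have h1 : |y j| = Real.sqrt ((y j) ^ 2) := (Real.sqrt_sq_eq_abs _).symm
  rw [h1]
  apply Real.sqrt_le_sqrt
  have := Finset.single_le_sum (f := fun i => ‖y i‖ ^ 2) (fun i _ => by positivity)
    (Finset.mem_univ j)
  simpa [Real.norm_eq_abs, sq_abs] using this

lemma pow_sub_pow_le_aux {a b : ℝ} (n : ℕ) (ha : 0 ≤ a) (hab : a ≤ b) :
    b ^ n - a ^ n ≤ n * b ^ (n - 1) * (b - a) := by
  have hgeom := geom_sum₂_mul (R := ℝ) b a n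
  rw [← hgeom]
  have hsum : (∑ i ∈ Finset.range n, b ^ i * a ^ (n - 1 - i)) ≤ n * b ^ (n - 1) := by
    calc (∑ i ∈ Finset.range n, b ^ i * a ^ (n - 1 - i))
        ≤ ∑ i ∈ Finset.range n, b ^ (n - 1) := by
          apply Finset.sum_le_sum
          intro i hi
          rw [Finset.mem_range] at hi
          calc b ^ i * a ^ (n - 1 - i) ≤ b ^ i * b ^ (n - 1 - i) := by
                have := pow_le_pow_left₀ ha hab (n - 1 - i)
                have hb : (0:ℝ) ≤ b ^ i := pow_nonneg (ha.trans hab) i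
                nlinarith [pow_nonneg ha (n-1-i), pow_nonneg (ha.trans hab) (n-1-i)]
            _ = b ^ (n - 1) := by
                rw [← pow_add]
                congr 1
                omega
      _ = n * b ^ (n - 1) := by simp [Finset.sum_const, nsmul_eq_mul]
  have hba : 0 ≤ b - a := by linarith
  calc (∑ i ∈ Finset.range n, b ^ i * a ^ (n - 1 - i)) * (b - a)
      ≤ (n * b ^ (n - 1)) * (b - a) := by
        apply mul_le_mul_of_nonneg_right hsum hba
    _ = n * b ^ (n - 1) * (b - a) := by ring

lemma lipschitz_key {m n : ℕ} (hn : 1 ≤ n) {R : ℝ} (hR : 0 < R) (j : Fin m)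
    (p q : EuclideanSpace ℝ (Fin m)) (hpq : ‖q‖ ≤ ‖p‖) :
    |p j * (max ‖p‖ R ^ n)⁻¹ - q j * (max ‖q‖ R ^ n)⁻¹| ≤ (n + 1) / R ^ n * ‖p - q‖ := by
  set a := max ‖q‖ R with ha_def
  set b := max ‖p‖ R with hb_def
  have haR : R ≤ a := le_max_right _ _
  have hbR : R ≤ b := le_max_right _ _
  have ha0 : 0 < a := lt_of_lt_of_le hR haR
  have hb0 : 0 < b := lt_of_lt_of_le hR hbR
  have hab : a ≤ b := max_le_max hpq le_rfl
  have hpow : a ^ n ≤ b ^ n := pow_le_pow_left₀ ha0.le hab n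
  have hRn : (0:ℝ) < R ^ n := by positivity
  have han : (0:ℝ) < a ^ n := by positivity
  have hbn : (0:ℝ) < b ^ n := by positivity
  have step1 : |p j - q j| ≤ ‖p - q‖ := by
    have := coord_abs_le_norm (p - q) j
    simpa using this
  have step2 : (b ^ n)⁻¹ ≤ (R ^ n)⁻¹ := by
    apply inv_anti₀ hRn
    exact pow_le_pow_left₀ hR.le hbR n
  have step4 : b - a ≤ ‖p - q‖ := by
    have h1 : |max ‖p‖ R - max ‖q‖ R| ≤ |‖p‖ - ‖q‖| := abs_max_sub_max_le_abs _ _ _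
    have h2 : |‖p‖ - ‖q‖| ≤ ‖p - q‖ := abs_norm_sub_norm_le p q
    calc b - a ≤ |b - a| := le_abs_self _
      _ ≤ |‖p‖ - ‖q‖| := h1
      _ ≤ ‖p - q‖ := h2
  have step3 : b ^ n - a ^ n ≤ n * b ^ (n - 1) * (b - a) := pow_sub_pow_le_aux n ha0.le hab
  have hq : |q j| ≤ a := (coord_abs_le_norm q j).trans (le_max_left _ _)
  have key2 : a * ((a ^ n)⁻¹ - (b ^ n)⁻¹) ≤ n * ‖p - q‖ / R ^ n := by
    have e1 : (a ^ n)⁻¹ - (b ^ n)⁻¹ = (b ^ n - a ^ n) / (a ^ n * b ^ n) := by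
      field_simp
    rw [e1]
    have e2 : a * ((b ^ n - a ^ n) / (a ^ n * b ^ n))
        ≤ a * ((n * b ^ (n - 1) * (b - a)) / (a ^ n * b ^ n)) := by
      apply mul_le_mul_of_nonneg_left _ ha0.le
      apply div_le_div_of_nonneg_right step3 (by positivity) |>.trans_eq rfl
    refine e2.trans ?_
    have e3 : a * ((n * b ^ (n - 1) * (b - a)) / (a ^ n * b ^ n))
        = n * (b - a) / (a ^ (n - 1) * b) := by
      have han1 : a ^ n = a ^ (n - 1) * a := by
        conv_lhs => rw [← Nat.sub_add_cancel hn]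
        rw [pow_succ]
      have hbn1 : b ^ n = b ^ (n - 1) * b := by
        conv_lhs => rw [← Nat.sub_add_cancel hn]
        rw [pow_succ]
      rw [han1, hbn1]
      have : a ^ (n-1) ≠ 0 := by positivity
      have : b ^ (n-1) ≠ 0 := by positivity
      field_simp
    rw [e3]
    have hRden : R ^ n ≤ a ^ (n - 1) * b := by
      have h1 : R ^ (n - 1) ≤ a ^ (n - 1) := pow_le_pow_left₀ hR.le haR _
      have h2 : R ^ n = R ^ (n - 1) * R := by
        conv_lhs => rw [← Nat.sub_add_cancel hn]
        rw [pow_succ]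
      rw [h2]
      exact mul_le_mul h1 hbR hR.le (by positivity)
    have hba' : 0 ≤ b - a := by linarith
    apply div_le_div₀ (by positivity) _ hRn hRden
    exact mul_le_mul_of_nonneg_left step4 (by positivity)
  calc |p j * (b ^ n)⁻¹ - q j * (a ^ n)⁻¹|
      = |(p j - q j) * (b ^ n)⁻¹ + q j * ((b ^ n)⁻¹ - (a ^ n)⁻¹)| := by ring_nf
    _ ≤ |(p j - q j) * (b ^ n)⁻¹| + |q j * ((b ^ n)⁻¹ - (a ^ n)⁻¹)| := abs_add_le _ _
    _ = |p j - q j| * (b ^ n)⁻¹ + |q j| * ((a ^ n)⁻¹ - (b ^ n)⁻¹) := by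
        rw [abs_mul, abs_mul, abs_of_nonneg (by positivity : (0:ℝ) ≤ (b ^ n)⁻¹),
          abs_of_nonpos (by simp [inv_anti₀ han hpow] : (b ^ n)⁻¹ - (a ^ n)⁻¹ ≤ 0)]
        ring
    _ ≤ ‖p - q‖ * (R ^ n)⁻¹ + a * ((a ^ n)⁻¹ - (b ^ n)⁻¹) := by
        have h1 : |p j - q j| * (b ^ n)⁻¹ ≤ ‖p - q‖ * (R ^ n)⁻¹ :=
          mul_le_mul step1 step2 (by positivity) (norm_nonneg _)
        have h2 : |q j| * ((a ^ n)⁻¹ - (b ^ n)⁻¹) ≤ a * ((a ^ n)⁻¹ - (b ^ n)⁻¹) := by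
          apply mul_le_mul_of_nonneg_right hq
          simp [inv_anti₀ han hpow, sub_nonneg]
        linarith
    _ ≤ ‖p - q‖ * (R ^ n)⁻¹ + n * ‖p - q‖ / R ^ n := by linarith
    _ = (n + 1) / R ^ n * ‖p - q‖ := by field_simp; ring

lemma lipschitz_coord_inv_pow {m n : ℕ} (hn : 1 ≤ n) {R : ℝ} (hR : 0 < R) (j : Fin m) :
    LipschitzWith (⟨(n + 1) / R ^ n, by positivity⟩ : NNReal)
      (fun y : EuclideanSpace ℝ (Fin m) => y j * (max ‖y‖ R ^ n)⁻¹) := by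
  apply LipschitzWith.of_dist_le_mul
  intro p q
  simp only [NNReal.coe_mk, Real.dist_eq, dist_eq_norm]
  rcases le_total ‖q‖ ‖p‖ with h | h
  · rw [Real.norm_eq_abs]
    exact lipschitz_key hn hR j p q h
  · rw [Real.norm_eq_abs, abs_sub_comm, norm_sub_rev]
    exact lipschitz_key hn hR j q p h

end Aux

section Phi

variable {m : ℕ}

local notation "E'" => EuclideanSpace ℝ (Fin m)

lemma hasCompactSupport_of_tsupport {φ : E' → ℝ} (h : tsupport φ ⊆ ball 0 1) :
    HasCompactSupport φ := by
  apply HasCompactSupport.intro (isCompact_closedBall (0 : E') 1)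
  intro y hy
  by_contra h0
  exact hy (ball_subset_closedBall (h (subset_tsupport φ (by simpa using h0))))

lemma Dphi_contDiff {φ : E' → ℝ} (hφ : ContDiff ℝ (⊤ : ℕ∞) φ) (v : E') :
    ContDiff ℝ (⊤ : ℕ∞) (fun z => fderiv ℝ φ z v) :=
  (hφ.fderiv_right (by simp)).clm_apply contDiff_const

lemma Dphi_hasCompactSupport {φ : E' → ℝ} (hs : HasCompactSupport φ) (v : E') :
    HasCompactSupport (fun z => fderiv ℝ φ z v) := by
  exact (hs.fderiv ℝ).comp_left (g := fun L : E' →L[ℝ] ℝ => L v) rfl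

lemma Dphi_zero_off_tsupport {φ : E' → ℝ} {y : E'} (hy : y ∉ tsupport φ) (v : E') :
    fderiv ℝ φ y v = 0 := by
  have : fderiv ℝ φ y = 0 := by
    have := support_fderiv_subset (𝕜 := ℝ) (f := φ)
    by_contra h0
    exact hy (this (by simpa using h0))
  simp [this]

/-- symmetry of second derivatives, in the form we need -/
lemma snd_deriv_symm {φ : E' → ℝ} (hφ : ContDiff ℝ (⊤ : ℕ∞) φ) (y u v : E') :
    fderiv ℝ (fun z => fderiv ℝ φ z u) y v = fderiv ℝ (fun z => fderiv ℝ φ z v) y u := by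
  have hd : Differentiable ℝ (fderiv ℝ φ) := (hφ.fderiv_right (m := (⊤ : ℕ∞)) (by simp)).differentiable (by simp)
  have h1 : fderiv ℝ (fun z => fderiv ℝ φ z u) y = (fderiv ℝ (fderiv ℝ φ) y).flip u := by
    rw [fderiv_clm_apply (hd.differentiableAt) (differentiableAt_const u)]
    ext w
    simp
  have h2 : fderiv ℝ (fun z => fderiv ℝ φ z v) y = (fderiv ℝ (fderiv ℝ φ) y).flip v := by
    rw [fderiv_clm_apply (hd.differentiableAt) (differentiableAt_const v)]
    ext w
    simp
  rw [h1, h2]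
  simp only [ContinuousLinearMap.flip_apply]
  exact second_derivative_symmetric
    (fun z => ((hφ.differentiable (by simp)) z).hasFDerivAt)
    ((hd y).hasFDerivAt) v u

/-- integration by parts against a Lipschitz function -/
lemma lipschitz_ibp {u : E' → ℝ} {C : NNReal} (hu : LipschitzWith C u)
    {φ : E' → ℝ} (hφ : ContDiff ℝ (⊤ : ℕ∞) φ) (hsupp : HasCompactSupport φ) (v : E') :
    ∫ y, lineDeriv ℝ u y v * φ y = - ∫ y, u y * fderiv ℝ φ y v := by
  obtain ⟨D, hD⟩ := hφ.lipschitzWith_of_hasCompactSupport hsupp (by simp)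
  have h := hu.integral_lineDeriv_mul_eq (μ := volume) hD hsupp v
  rw [h]
  rw [← integral_neg]
  apply integral_congr_ae
  filter_upwards with y
  have hdiff : DifferentiableAt ℝ φ y := (hφ.differentiable (by simp)) y
  have : lineDeriv ℝ φ y (-v) = fderiv ℝ φ y (-v) :=
    (hdiff.hasFDerivAt.hasLineDerivAt (-v)).lineDeriv
  rw [this, map_neg]
  ring

lemma integral_Dphi_eq_zero {φ : E' → ℝ} (hφ : ContDiff ℝ (⊤ : ℕ∞) φ)
    (hsupp : HasCompactSupport φ) (v : E') :
    ∫ y, fderiv ℝ φ y v = 0 := by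
  have h := lipschitz_ibp (u := fun _ : E' => (1:ℝ)) (C := 0)
    (LipschitzWith.const (1:ℝ)) hφ hsupp v
  have hz : ∀ y : E', lineDeriv ℝ (fun _ : E' => (1:ℝ)) y v = 0 := fun y => by
    simpa using ((hasFDerivAt_const (1:ℝ) y).hasLineDerivAt v).lineDeriv
  simp only [hz, zero_mul, integral_zero, one_mul] at h
  linarith

end Phi

set_option maxHeartbeats 4000000 in
theorem stmt_19 (N : ℕ) (hN : 2 ≤ N) (α β R b₁ b₂ c : ℝ)
    (hα : 0 < α) (hαβ : α ≤ β) (hR0 : 0 < R) (hR1 : R < 1)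
    (h1 : b₁ = b₂ + c / R ^ N)
    (h2 : α * b₁ = β * (b₂ + (1 - N : ℝ) * c / R ^ N))
    (h3 : b₂ + c = 1)
    (k : Fin N) :
    let f : ℝ → ℝ := fun r => if r < R then b₁ else b₂ + c / r ^ N
    let a : ℝ → ℝ := fun r => if r < R then α else β
    let w : EuclideanSpace ℝ (Fin N) → ℝ := fun y => y k * f ‖y‖
    -- the (a.e.) gradient of w
    let G : EuclideanSpace ℝ (Fin N) → EuclideanSpace ℝ (Fin N) := fun y =>
      if ‖y‖ < R then b₁ • EuclideanSpace.single k (1 : ℝ)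
      else (b₂ + c / ‖y‖ ^ N) • EuclideanSpace.single k (1 : ℝ)
        + (-(N : ℝ) * c * y k / ‖y‖ ^ (N + 2)) • y
    -- w ∈ H¹(B(0,1)): w and G are in L²(B(0,1)) and G is the weak gradient of w
    MemLp w 2 (volume.restrict (ball (0 : EuclideanSpace ℝ (Fin N)) 1)) ∧
    MemLp G 2 (volume.restrict (ball (0 : EuclideanSpace ℝ (Fin N)) 1)) ∧
    (∀ φ : EuclideanSpace ℝ (Fin N) → ℝ, ContDiff ℝ (⊤ : ℕ∞) φ →
      tsupport φ ⊆ ball (0 : EuclideanSpace ℝ (Fin N)) 1 →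
      ∀ i : Fin N,
        ∫ y in ball (0 : EuclideanSpace ℝ (Fin N)) 1,
            w y * fderiv ℝ φ y (EuclideanSpace.single i (1 : ℝ))
          = - ∫ y in ball (0 : EuclideanSpace ℝ (Fin N)) 1, G y i * φ y) ∧
    -- boundary values: w(y) = y_k on the unit sphere
    (∀ y : EuclideanSpace ℝ (Fin N), ‖y‖ = 1 → w y = y k) ∧
    -- weak solution of −div(a(|y|)∇w) = 0 in B(0,1)
    (∀ φ : EuclideanSpace ℝ (Fin N) → ℝ, ContDiff ℝ (⊤ : ℕ∞) φ →
      tsupport φ ⊆ ball (0 : EuclideanSpace ℝ (Fin N)) 1 →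
      ∫ y in ball (0 : EuclideanSpace ℝ (Fin N)) 1,
          a ‖y‖ * ∑ i : Fin N, G y i * fderiv ℝ φ y (EuclideanSpace.single i (1 : ℝ))
        = 0) := by
  intro f a w G
  have hN1 : 1 ≤ N := by omega
  have hRN : (0:ℝ) < R ^ N := by positivity
  have hf_def : ∀ r, f r = if r < R then b₁ else b₂ + c / r ^ N := fun _ => rfl
  have hw_def : ∀ y, w y = y k * f ‖y‖ := fun _ => rfl
  have ha_def : ∀ r, a r = if r < R then α else β := fun _ => rfl
  have hG_lt : ∀ y : EuclideanSpace ℝ (Fin N), ‖y‖ < R →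
      G y = b₁ • EuclideanSpace.single k (1:ℝ) := fun y hy => if_pos hy
  have hG_ge : ∀ y : EuclideanSpace ℝ (Fin N), ¬ ‖y‖ < R →
      G y = (b₂ + c / ‖y‖ ^ N) • EuclideanSpace.single k (1 : ℝ)
        + (-(N : ℝ) * c * y k / ‖y‖ ^ (N + 2)) • y := fun y hy => if_neg hy
  have hw_eq : ∀ y : EuclideanSpace ℝ (Fin N),
      w y = b₂ * y k + c * (y k * (max ‖y‖ R ^ N)⁻¹) := by
    intro y
    rw [hw_def, hf_def]
    by_cases h : ‖y‖ < R
    · rw [if_pos h, max_eq_right h.le, h1, div_eq_mul_inv]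
      ring
    · rw [if_neg h, max_eq_left (le_of_not_gt h), div_eq_mul_inv]
      ring
  have habs : ∀ (cc : ℝ), LipschitzWith ⟨|cc|, abs_nonneg cc⟩ (fun t : ℝ => cc * t) := by
    intro cc
    apply LipschitzWith.of_dist_le_mul
    intro x y
    rw [Real.dist_eq, Real.dist_eq, ← mul_sub, abs_mul]
    exact le_rfl
  have hcoordlip : ∀ j : Fin N, LipschitzWith 1
      (fun y : EuclideanSpace ℝ (Fin N) => y j) := by
    intro j
    apply LipschitzWith.of_dist_le_mul
    intro p q
    rw [Real.dist_eq, dist_eq_norm]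
    have := coord_abs_le_norm (p - q) j
    simpa using this
  obtain ⟨Cw, hwlip⟩ : ∃ C : NNReal, LipschitzWith C w := by
    have l1 := (habs b₂).comp (hcoordlip k)
    have l2 := (habs c).comp (lipschitz_coord_inv_pow (m := N) hN1 hR0 k)
    have hfe : w = fun y : EuclideanSpace ℝ (Fin N) =>
        b₂ * y k + c * (y k * (max ‖y‖ R ^ N)⁻¹) := funext hw_eq
    have hl := l1.add l2
    exact ⟨_, by rw [hfe]; exact hl⟩
  haveI : Nontrivial (EuclideanSpace ℝ (Fin N)) := by
    refine ⟨⟨EuclideanSpace.single k 1, 0, fun h0 => ?_⟩⟩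
    have hn : ‖EuclideanSpace.single k (1:ℝ)‖ = 1 := by
      rw [EuclideanSpace.norm_single]; norm_num
    rw [h0] at hn
    simp at hn
  haveI : IsFiniteMeasure (volume.restrict (ball (0 : EuclideanSpace ℝ (Fin N)) 1)) := by
    constructor
    rw [Measure.restrict_apply_univ]
    exact measure_ball_lt_top
  have hGmeas : Measurable G := by
    have hset : MeasurableSet {y : EuclideanSpace ℝ (Fin N) | ‖y‖ < R} :=
      measurableSet_lt measurable_norm measurable_const
    have hcm : ∀ j : Fin N, Measurable (fun y : EuclideanSpace ℝ (Fin N) => y j) :=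
      fun j => (hcoordlip j).continuous.measurable
    apply Measurable.ite hset measurable_const
    apply Measurable.add
    · refine Measurable.smul (f := fun x : EuclideanSpace ℝ (Fin N) => b₂ + c / ‖x‖ ^ N)
        (g := fun _ => EuclideanSpace.single k (1:ℝ)) ?_ measurable_const
      exact measurable_const.add (measurable_const.div ((measurable_norm).pow_const N))
    · refine Measurable.smul
        (f := fun x : EuclideanSpace ℝ (Fin N) => -(N : ℝ) * c * x k / ‖x‖ ^ (N + 2))
        (g := id) ?_ measurable_id
      apply Measurable.div _ ((measurable_norm).pow_const (N + 2))
      exact (measurable_const.mul (hcm k))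
  have hsphnull : volume {y : EuclideanSpace ℝ (Fin N) | ‖y‖ = R} = 0 := by
    have hset : {y : EuclideanSpace ℝ (Fin N) | ‖y‖ = R} = sphere (0 : EuclideanSpace ℝ (Fin N)) R := by
      ext y
      simp [mem_sphere_zero_iff_norm]
    rw [hset]
    exact Measure.addHaar_sphere (μ := volume) 0 R
  have haeoff : ∀ {g h : EuclideanSpace ℝ (Fin N) → ℝ},
      (∀ x, ‖x‖ ≠ R → g x = h x) → g =ᵐ[volume] h := by
    intro g h hgh
    have hsub : {x : EuclideanSpace ℝ (Fin N) | ¬ g x = h x} ⊆ {y | ‖y‖ = R} := by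
      intro x hx
      by_contra h'
      exact hx (hgh x h')
    exact ae_iff.2 (measure_mono_null hsub hsphnull)
  have hinner : ∀ (x : EuclideanSpace ℝ (Fin N)) (i : Fin N),
      (innerSL ℝ x) (EuclideanSpace.single i (1:ℝ)) = x i := by
    intro x i
    simp [EuclideanSpace.inner_single_right]
  have hwld : ∀ x : EuclideanSpace ℝ (Fin N), ‖x‖ ≠ R → ∀ i : Fin N,
      lineDeriv ℝ w x (EuclideanSpace.single i 1) = G x i := by
    intro x hx i
    rcases lt_or_gt_of_ne hx with hlt | hgt
    · have hopen : IsOpen {y : EuclideanSpace ℝ (Fin N) | ‖y‖ < R} :=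
        isOpen_lt continuous_norm continuous_const
      have hev : w =ᶠ[nhds x] (fun y => b₁ * y k) := by
        filter_upwards [hopen.mem_nhds hlt] with y hy
        rw [hw_def, hf_def, if_pos hy]
        ring
      rw [hev.lineDeriv_eq]
      have hproj : HasFDerivAt (fun y : EuclideanSpace ℝ (Fin N) => y k)
          (EuclideanSpace.proj (𝕜 := ℝ) k) x := (EuclideanSpace.proj (𝕜 := ℝ) k).hasFDerivAt
      have hld : HasLineDerivAt ℝ (fun y : EuclideanSpace ℝ (Fin N) => b₁ * y k)
          ((b₁ • (EuclideanSpace.proj (𝕜 := ℝ) k)) (EuclideanSpace.single i 1)) x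
          (EuclideanSpace.single i 1) := (hproj.const_mul b₁).hasLineDerivAt _
      rw [hld.lineDeriv, hG_lt x hlt]
      by_cases h : i = k
      · simp [h, EuclideanSpace.single_apply]
      · simp [EuclideanSpace.single_apply, h, Ne.symm h]
    · have hx0 : x ≠ 0 := by
        intro h0
        rw [h0, norm_zero] at hgt
        linarith
      have hnx : ‖x‖ ≠ 0 := norm_ne_zero_iff.2 hx0
      have hopen : IsOpen {y : EuclideanSpace ℝ (Fin N) | R < ‖y‖} :=
        isOpen_lt continuous_const continuous_norm
      have hev : w =ᶠ[nhds x] (fun y => y k * (b₂ + c * (‖y‖ ^ N)⁻¹)) := by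
        filter_upwards [hopen.mem_nhds hgt] with y hy
        rw [hw_def, hf_def, if_neg (not_lt.2 (le_of_lt hy)), div_eq_mul_inv]
      rw [hev.lineDeriv_eq]
      have h2d : HasFDerivAt (fun y : EuclideanSpace ℝ (Fin N) => b₂ + c * (‖y‖ ^ N)⁻¹)
          (c • ((-(N:ℝ) * (‖x‖ ^ (N + 2))⁻¹) • (innerSL ℝ x))) x :=
        ((inv_pow_norm_hasFDerivAt N hx0).const_mul c).const_add b₂
      have hproj : HasFDerivAt (fun y : EuclideanSpace ℝ (Fin N) => y k)
          (EuclideanSpace.proj (𝕜 := ℝ) k) x := (EuclideanSpace.proj (𝕜 := ℝ) k).hasFDerivAt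
      have hld : HasLineDerivAt ℝ (fun y : EuclideanSpace ℝ (Fin N) => y k * (b₂ + c * (‖y‖ ^ N)⁻¹))
          (((fun y : EuclideanSpace ℝ (Fin N) => y k) x • (c • ((-(N:ℝ) * (‖x‖ ^ (N + 2))⁻¹) • (innerSL ℝ x)))
            + (b₂ + c * (‖x‖ ^ N)⁻¹) • (EuclideanSpace.proj (𝕜 := ℝ) k)) (EuclideanSpace.single i 1)) x
          (EuclideanSpace.single i 1) := (hproj.mul h2d).hasLineDerivAt _
      rw [hld.lineDeriv, hG_ge x (not_lt.2 hgt.le)]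
      simp only [ContinuousLinearMap.add_apply, ContinuousLinearMap.smul_apply,
        ContinuousLinearMap.coe_smul', Pi.smul_apply, smul_eq_mul,
        PiLp.add_apply, PiLp.smul_apply, hinner, PiLp.proj_apply,
        EuclideanSpace.single_apply, div_eq_mul_inv]
      by_cases h : i = k
      · simp only [h, if_pos rfl]
        ring
      · simp only [if_neg h, if_neg (fun hh => h hh.symm : ¬ k = i)]
        ring
  set P : Fin N → EuclideanSpace ℝ (Fin N) → ℝ :=
    fun j y => β * c * ((R ^ N)⁻¹ * y j - y j * (max ‖y‖ R ^ N)⁻¹) with hP_def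
  obtain ⟨CP, hPlip⟩ : ∃ C : NNReal, ∀ j, LipschitzWith C (P j) :=
    ⟨⟨|β * c|, abs_nonneg _⟩ * (⟨|(R ^ N)⁻¹|, abs_nonneg _⟩ * 1 + ⟨(N + 1) / R ^ N, by positivity⟩),
      fun j => (habs (β * c)).comp
        (((habs ((R ^ N)⁻¹)).comp (hcoordlip j)).sub
          (lipschitz_coord_inv_pow (m := N) hN1 hR0 j))⟩
  have hPcont : ∀ j, Continuous (P j) := fun j => (hPlip j).continuous
  have hPld0 : ∀ (j : Fin N) (x : EuclideanSpace ℝ (Fin N)), ‖x‖ < R →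
      ∀ v, lineDeriv ℝ (P j) x v = 0 := by
    intro j x hlt v
    have hopen : IsOpen {y : EuclideanSpace ℝ (Fin N) | ‖y‖ < R} :=
      isOpen_lt continuous_norm continuous_const
    have hev : P j =ᶠ[nhds x] (fun _ => 0) := by
      filter_upwards [hopen.mem_nhds hlt] with y hy
      simp only [hP_def]
      rw [max_eq_right hy.le]
      ring
    rw [hev.lineDeriv_eq]
    simpa using ((hasFDerivAt_const (0:ℝ) x).hasLineDerivAt v).lineDeriv
  have hPldgt : ∀ (j : Fin N) (x : EuclideanSpace ℝ (Fin N)), R < ‖x‖ → ∀ i : Fin N,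
      lineDeriv ℝ (P j) x (EuclideanSpace.single i 1)
        = β * c * (((R ^ N)⁻¹ - (‖x‖ ^ N)⁻¹) * (if j = i then 1 else 0)
            + (N : ℝ) * (‖x‖ ^ (N + 2))⁻¹ * x j * x i) := by
    intro j x hgt i
    have hx0 : x ≠ 0 := by
      intro h0
      rw [h0, norm_zero] at hgt
      linarith
    have hopen : IsOpen {y : EuclideanSpace ℝ (Fin N) | R < ‖y‖} :=
      isOpen_lt continuous_const continuous_norm
    have hev : P j =ᶠ[nhds x]
        (fun y => β * c * ((R ^ N)⁻¹ * y j - y j * (‖y‖ ^ N)⁻¹)) := by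
      filter_upwards [hopen.mem_nhds hgt] with y hy
      simp only [hP_def]
      rw [max_eq_left (le_of_lt hy)]
    rw [hev.lineDeriv_eq]
    have hproj : HasFDerivAt (fun y : EuclideanSpace ℝ (Fin N) => y j)
        (EuclideanSpace.proj (𝕜 := ℝ) j) x := (EuclideanSpace.proj (𝕜 := ℝ) j).hasFDerivAt
    have hb := hproj.mul (inv_pow_norm_hasFDerivAt N hx0)
    have ha := hproj.const_mul ((R ^ N)⁻¹)
    have hld : HasLineDerivAt ℝ
        (fun y : EuclideanSpace ℝ (Fin N) => β * c * ((R ^ N)⁻¹ * y j - y j * (‖y‖ ^ N)⁻¹))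
        (((β * c) • ((R ^ N)⁻¹ • (EuclideanSpace.proj (𝕜 := ℝ) j)
          - ((fun y : EuclideanSpace ℝ (Fin N) => y j) x • ((-(N:ℝ) * (‖x‖ ^ (N + 2))⁻¹) • (innerSL ℝ x))
            + (‖x‖ ^ N)⁻¹ • (EuclideanSpace.proj (𝕜 := ℝ) j)))) (EuclideanSpace.single i 1)) x
        (EuclideanSpace.single i 1) := ((ha.sub hb).const_mul (β * c)).hasLineDerivAt _
    rw [hld.lineDeriv]
    simp only [ContinuousLinearMap.add_apply, ContinuousLinearMap.smul_apply,
      ContinuousLinearMap.sub_apply, ContinuousLinearMap.coe_smul', Pi.smul_apply,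
      smul_eq_mul, hinner, PiLp.proj_apply, EuclideanSpace.single_apply]
    by_cases h : j = i
    · subst h
      simp only [if_pos rfl, if_true, eq_self_iff_true]
      ring
    · simp only [if_neg h, if_neg (show ¬ i = j from fun hh => h hh.symm)]
      ring
  have hsq : ∀ x : EuclideanSpace ℝ (Fin N), (∑ j, x j * x j) = ‖x‖ ^ 2 := by
    intro x
    have h := real_inner_self_eq_norm_sq x
    rw [← h]
    simp only [PiLp.inner_apply, RCLike.inner_apply, conj_trivial]
  have hSsum : ∀ x : EuclideanSpace ℝ (Fin N), R < ‖x‖ →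
      (∑ j, lineDeriv ℝ (P j) x (EuclideanSpace.single j 1)) = (N : ℝ) * β * c / R ^ N := by
    intro x hgt
    have hx0 : x ≠ 0 := by
      intro h0
      rw [h0, norm_zero] at hgt
      linarith
    have hnx : ‖x‖ ≠ 0 := norm_ne_zero_iff.2 hx0
    have hR' : R ≠ 0 := ne_of_gt hR0
    have he : ∀ j : Fin N, lineDeriv ℝ (P j) x (EuclideanSpace.single j 1)
        = β * c * ((R ^ N)⁻¹ - (‖x‖ ^ N)⁻¹)
          + (β * c * (N : ℝ) * (‖x‖ ^ (N + 2))⁻¹) * (x j * x j) := by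
      intro j
      rw [hPldgt j x hgt j, if_pos rfl]
      ring
    rw [Finset.sum_congr rfl (fun j _ => he j), Finset.sum_add_distrib, Finset.sum_const,
      ← Finset.mul_sum, hsq x]
    simp only [Finset.card_univ, Fintype.card_fin, nsmul_eq_mul]
    have hpow : ‖x‖ ^ (N + 2) = ‖x‖ ^ N * ‖x‖ ^ 2 := pow_add _ _ _
    rw [hpow]
    field_simp
    ring
  have hkey : β * b₂ = α * b₁ + (N - 1 : ℝ) * β * c / R ^ N := by
    have hR' : R ≠ 0 := ne_of_gt hR0
    rw [h2]
    field_simp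
    ring
  refine ⟨?_, ?_, ?_, ?_, ?_⟩
  · -- w ∈ L²
    apply MemLp.of_bound hwlip.continuous.aestronglyMeasurable (|b₁| + (|b₂| + |c| / R ^ N))
    rw [ae_restrict_iff' measurableSet_ball]
    filter_upwards with y hy
    rw [mem_ball_zero_iff] at hy
    rw [Real.norm_eq_abs, hw_def, hf_def]
    have hyk : |y k| ≤ 1 := (coord_abs_le_norm y k).trans hy.le
    have hb1 : (0:ℝ) ≤ |b₁| := abs_nonneg _
    have hb2 : (0:ℝ) ≤ |b₂| := abs_nonneg _
    have hc0 : (0:ℝ) ≤ |c| / R ^ N := by positivity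
    by_cases h : ‖y‖ < R
    · rw [if_pos h, abs_mul]
      have := mul_le_mul_of_nonneg_right hyk (abs_nonneg b₁)
      nlinarith [abs_nonneg (y k)]
    · rw [if_neg h]
      have hyR : R ≤ ‖y‖ := le_of_not_gt h
      have hpow : R ^ N ≤ ‖y‖ ^ N := pow_le_pow_left₀ hR0.le hyR N
      have h4 : |b₂ + c / ‖y‖ ^ N| ≤ |b₂| + |c| / R ^ N := by
        refine (abs_add_le _ _).trans ?_
        have : |c / ‖y‖ ^ N| ≤ |c| / R ^ N := by
          rw [abs_div, abs_of_nonneg (by positivity : (0:ℝ) ≤ ‖y‖ ^ N)]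
          exact div_le_div_of_nonneg_left (abs_nonneg c) hRN hpow |>.trans_eq rfl
        linarith
      rw [abs_mul]
      have h5 : |y k| * |b₂ + c / ‖y‖ ^ N| ≤ 1 * (|b₂| + |c| / R ^ N) :=
        mul_le_mul hyk h4 (abs_nonneg _) zero_le_one
      nlinarith
  · -- G ∈ L²
    apply MemLp.of_bound hGmeas.aestronglyMeasurable
      (|b₁| + (|b₂| + |c| / R ^ N + N * |c| / R ^ N))
    rw [ae_restrict_iff' measurableSet_ball]
    filter_upwards with y hy
    rw [mem_ball_zero_iff] at hy
    have hb1 : (0:ℝ) ≤ |b₁| := abs_nonneg _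
    have hb2 : (0:ℝ) ≤ |b₂| := abs_nonneg _
    have hc0 : (0:ℝ) ≤ |c| / R ^ N := by positivity
    have hc1 : (0:ℝ) ≤ N * |c| / R ^ N := by positivity
    by_cases h : ‖y‖ < R
    · rw [hG_lt y h, norm_smul, EuclideanSpace.norm_single]
      simp only [norm_one, mul_one, Real.norm_eq_abs]
      linarith
    · rw [hG_ge y h]
      have hyR : R ≤ ‖y‖ := le_of_not_gt h
      have hy0 : (0:ℝ) < ‖y‖ := lt_of_lt_of_le hR0 hyR
      have hpow : R ^ N ≤ ‖y‖ ^ N := pow_le_pow_left₀ hR0.le hyR N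
      have hpowpos : (0:ℝ) < ‖y‖ ^ N := by positivity
      refine (norm_add_le _ _).trans ?_
      rw [norm_smul, norm_smul, EuclideanSpace.norm_single]
      simp only [norm_one, mul_one, Real.norm_eq_abs]
      have h4 : |b₂ + c / ‖y‖ ^ N| ≤ |b₂| + |c| / R ^ N := by
        refine (abs_add_le _ _).trans ?_
        have : |c / ‖y‖ ^ N| ≤ |c| / R ^ N := by
          rw [abs_div, abs_of_nonneg hpowpos.le]
          exact div_le_div_of_nonneg_left (abs_nonneg c) hRN hpow |>.trans_eq rfl
        linarith
      have h5 : |(-(N : ℝ) * c * y k / ‖y‖ ^ (N + 2))| * ‖y‖ ≤ N * |c| / R ^ N := by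
        rw [abs_div, abs_of_nonneg (by positivity : (0:ℝ) ≤ ‖y‖ ^ (N + 2)), abs_mul, abs_mul,
          abs_neg, Nat.abs_cast]
        have hyk : |y k| ≤ ‖y‖ := coord_abs_le_norm y k
        have e1 : ‖y‖ ^ (N + 2) = ‖y‖ ^ N * (‖y‖ * ‖y‖) := by ring
        calc (N : ℝ) * |c| * |y k| / ‖y‖ ^ (N + 2) * ‖y‖
            ≤ (N : ℝ) * |c| * ‖y‖ / ‖y‖ ^ (N + 2) * ‖y‖ := by
              gcongr
          _ = (N : ℝ) * |c| / ‖y‖ ^ N := by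
              rw [e1]
              field_simp
          _ ≤ (N : ℝ) * |c| / R ^ N := by gcongr
      linarith
  · -- weak gradient
    intro φ hφ hsupp i
    have hφc : HasCompactSupport φ := hasCompactSupport_of_tsupport hsupp
    have hDzero : ∀ y ∉ ball (0 : EuclideanSpace ℝ (Fin N)) 1,
        fderiv ℝ φ y (EuclideanSpace.single i 1) = 0 := fun y hy =>
      Dphi_zero_off_tsupport (fun hc => hy (hsupp hc)) _
    have hphizero : ∀ y ∉ ball (0 : EuclideanSpace ℝ (Fin N)) 1, φ y = 0 := fun y hy =>
      image_eq_zero_of_notMem_tsupport (fun hc => hy (hsupp hc))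
    have hext1 : ∫ y in ball (0 : EuclideanSpace ℝ (Fin N)) 1,
        w y * fderiv ℝ φ y (EuclideanSpace.single i 1)
        = ∫ y, w y * fderiv ℝ φ y (EuclideanSpace.single i 1) :=
      setIntegral_eq_integral_of_forall_compl_eq_zero fun y hy => by
        rw [hDzero y hy, mul_zero]
    have hext2 : ∫ y in ball (0 : EuclideanSpace ℝ (Fin N)) 1, G y i * φ y
        = ∫ y, G y i * φ y :=
      setIntegral_eq_integral_of_forall_compl_eq_zero fun y hy => by
        rw [hphizero y hy, mul_zero]
    have hibp := lipschitz_ibp hwlip hφ hφc (EuclideanSpace.single i 1)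
    have hae : (fun y => lineDeriv ℝ w y (EuclideanSpace.single i 1) * φ y)
        =ᵐ[volume] fun y => G y i * φ y :=
      haeoff fun x hx => by rw [hwld x hx i]
    rw [integral_congr_ae hae] at hibp
    rw [hext1, hext2]
    linarith
  · -- boundary values
    intro y hy
    rw [hw_def, hf_def, hy]
    rw [if_neg (by linarith : ¬ (1:ℝ) < R)]
    simp [h3]
  · -- weak solution
    intro φ hφ hsupp
    have hφc : HasCompactSupport φ := hasCompactSupport_of_tsupport hsupp
    set D : Fin N → EuclideanSpace ℝ (Fin N) → ℝ :=
      fun i y => fderiv ℝ φ y (EuclideanSpace.single i 1) with hD_def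
    have hDcd : ∀ i, ContDiff ℝ (⊤ : ℕ∞) (D i) := fun i => Dphi_contDiff hφ _
    have hDcs : ∀ i, HasCompactSupport (D i) := fun i => Dphi_hasCompactSupport hφc _
    have hDint : ∀ i, Integrable (D i) := fun i =>
      (hDcd i).continuous.integrable_of_hasCompactSupport (hDcs i)
    have hDzero : ∀ i, ∀ y ∉ ball (0 : EuclideanSpace ℝ (Fin N)) 1, D i y = 0 := fun i y hy =>
      Dphi_zero_off_tsupport (fun hc => hy (hsupp hc)) _
    have hIntTk : ∀ (j : Fin N) (v : EuclideanSpace ℝ (Fin N)) (i : Fin N),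
        Integrable (fun y => lineDeriv ℝ (P j) y v * D i y) := by
      intro j v i
      exact (hDint i).bdd_mul (aestronglyMeasurable_lineDeriv (hPcont j) volume)
        (Filter.Eventually.of_forall fun y => norm_lineDeriv_le_of_lipschitz ℝ (hPlip j))
    have hIntS : Integrable
        (fun y => (∑ j, lineDeriv ℝ (P j) y (EuclideanSpace.single j 1)) * D k y) := by
      have hfe : (fun y => (∑ j, lineDeriv ℝ (P j) y (EuclideanSpace.single j 1)) * D k y)
          = fun y => ∑ j, lineDeriv ℝ (P j) y (EuclideanSpace.single j 1) * D k y := by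
        funext y
        rw [Finset.sum_mul]
      rw [hfe]
      exact integrable_finset_sum _ (fun j _ => hIntTk j _ k)
    have hIntT : Integrable
        (fun y => ∑ i, lineDeriv ℝ (P i) y (EuclideanSpace.single k 1) * D i y) :=
      integrable_finset_sum _ (fun i _ => hIntTk i _ i)
    have hpt : ∀ x : EuclideanSpace ℝ (Fin N), ‖x‖ ≠ R →
        a ‖x‖ * ∑ i, G x i * D i x
          = α * b₁ * D k x
            + (∑ j, lineDeriv ℝ (P j) x (EuclideanSpace.single j 1)) * D k x
            - ∑ i, lineDeriv ℝ (P i) x (EuclideanSpace.single k 1) * D i x := by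
      intro x hx
      rcases lt_or_gt_of_ne hx with hlt | hgt
      · rw [ha_def, if_pos hlt]
        have hGsum : ∑ i, G x i * D i x = b₁ * D k x := by
          have he : ∀ i : Fin N, G x i * D i x = if i = k then b₁ * D i x else 0 := by
            intro i
            rw [hG_lt x hlt]
            by_cases h : i = k
            · simp [h, EuclideanSpace.single_apply]
            · simp [EuclideanSpace.single_apply, h]
          rw [Finset.sum_congr rfl (fun i _ => he i)]
          simp
        have hz1 : ∑ j, lineDeriv ℝ (P j) x (EuclideanSpace.single j 1) = 0 :=
          Finset.sum_eq_zero fun j _ => hPld0 j x hlt _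
        have hz2 : ∑ i, lineDeriv ℝ (P i) x (EuclideanSpace.single k 1) * D i x = 0 :=
          Finset.sum_eq_zero fun i _ => by rw [hPld0 i x hlt _, zero_mul]
        rw [hGsum, hz1, hz2]
        ring
      · have hnl : ¬ ‖x‖ < R := not_lt.2 hgt.le
        have hx0 : x ≠ 0 := fun h0 => by rw [h0, norm_zero] at hgt; linarith
        have hnx : ‖x‖ ≠ 0 := norm_ne_zero_iff.2 hx0
        have hR' : R ≠ 0 := ne_of_gt hR0
        rw [ha_def, if_neg hnl]
        have hGsum : ∑ i, G x i * D i x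
            = (b₂ + c / ‖x‖ ^ N) * D k x
              + (-(N:ℝ) * c * x k / ‖x‖ ^ (N + 2)) * (∑ i, x i * D i x) := by
          have he : ∀ i : Fin N, G x i * D i x
              = (if i = k then (b₂ + c / ‖x‖ ^ N) * D i x else 0)
                + (-(N:ℝ) * c * x k / ‖x‖ ^ (N + 2)) * (x i * D i x) := by
            intro i
            rw [hG_ge x hnl]
            simp only [PiLp.add_apply, PiLp.smul_apply, smul_eq_mul,
              EuclideanSpace.single_apply]
            by_cases h : i = k
            · rw [if_pos h, if_pos h]
              ring
            · rw [if_neg h, if_neg h]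
              ring
          rw [Finset.sum_congr rfl (fun i _ => he i), Finset.sum_add_distrib, ← Finset.mul_sum]
          congr 1
          simp
        have hTsum : ∑ i, lineDeriv ℝ (P i) x (EuclideanSpace.single k 1) * D i x
            = β * c * ((R ^ N)⁻¹ - (‖x‖ ^ N)⁻¹) * D k x
              + β * c * (N:ℝ) * (‖x‖ ^ (N + 2))⁻¹ * x k * (∑ i, x i * D i x) := by
          have he : ∀ i : Fin N, lineDeriv ℝ (P i) x (EuclideanSpace.single k 1) * D i x
              = (if i = k then β * c * ((R ^ N)⁻¹ - (‖x‖ ^ N)⁻¹) * D i x else 0)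
                + β * c * (N:ℝ) * (‖x‖ ^ (N + 2))⁻¹ * x k * (x i * D i x) := by
            intro i
            rw [hPldgt i x hgt k]
            by_cases h : i = k
            · rw [if_pos h, if_pos h]
              ring
            · rw [if_neg h, if_neg h]
              ring
          rw [Finset.sum_congr rfl (fun i _ => he i), Finset.sum_add_distrib, ← Finset.mul_sum]
          congr 1
          simp
        rw [hGsum, hTsum, hSsum x hgt]
        linear_combination (D k x) * hkey
    have hext : ∫ y in ball (0 : EuclideanSpace ℝ (Fin N)) 1, a ‖y‖ * ∑ i, G y i * D i y
        = ∫ y, a ‖y‖ * ∑ i, G y i * D i y :=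
      setIntegral_eq_integral_of_forall_compl_eq_zero fun y hy => by
        rw [Finset.sum_congr rfl (fun i (_ : i ∈ Finset.univ) => by
          rw [hDzero i y hy, mul_zero]), Finset.sum_const_zero, mul_zero]
    rw [hext]
    have hae : (fun y => a ‖y‖ * ∑ i, G y i * D i y) =ᵐ[volume]
        (fun y => α * b₁ * D k y
          + (∑ j, lineDeriv ℝ (P j) y (EuclideanSpace.single j 1)) * D k y
          - ∑ i, lineDeriv ℝ (P i) y (EuclideanSpace.single k 1) * D i y) := haeoff hpt
    have hIadd : Integrable (fun y => α * b₁ * D k y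
        + (∑ j, lineDeriv ℝ (P j) y (EuclideanSpace.single j 1)) * D k y) volume :=
      ((hDint k).const_mul (α * b₁)).add hIntS
    rw [integral_congr_ae hae,
      integral_sub hIadd hIntT,
      integral_add ((hDint k).const_mul (α * b₁)) hIntS,
      integral_const_mul, integral_Dphi_eq_zero hφ hφc]
    have hS : ∫ y, (∑ j, lineDeriv ℝ (P j) y (EuclideanSpace.single j 1)) * D k y
        = ∑ j, ∫ y, lineDeriv ℝ (P j) y (EuclideanSpace.single j 1) * D k y := by
      have hfe : (fun y => (∑ j, lineDeriv ℝ (P j) y (EuclideanSpace.single j 1)) * D k y)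
          = fun y => ∑ j, lineDeriv ℝ (P j) y (EuclideanSpace.single j 1) * D k y := by
        funext y
        rw [Finset.sum_mul]
      rw [hfe]
      exact integral_finset_sum _ (fun j _ => hIntTk j _ k)
    have hT : ∫ y, ∑ i, lineDeriv ℝ (P i) y (EuclideanSpace.single k 1) * D i y
        = ∑ i, ∫ y, lineDeriv ℝ (P i) y (EuclideanSpace.single k 1) * D i y :=
      integral_finset_sum _ (fun i _ => hIntTk i _ i)
    rw [hS, hT]
    have hterm : ∀ j : Fin N,
        ∫ y, lineDeriv ℝ (P j) y (EuclideanSpace.single j 1) * D k y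
          = ∫ y, lineDeriv ℝ (P j) y (EuclideanSpace.single k 1) * D j y := by
      intro j
      have hI1 : ∫ y, lineDeriv ℝ (P j) y (EuclideanSpace.single j 1) * D k y
          = - ∫ y, P j y * fderiv ℝ (D k) y (EuclideanSpace.single j 1) :=
        lipschitz_ibp (hPlip j) (hDcd k) (hDcs k) _
      have hI2 : ∫ y, lineDeriv ℝ (P j) y (EuclideanSpace.single k 1) * D j y
          = - ∫ y, P j y * fderiv ℝ (D j) y (EuclideanSpace.single k 1) :=
        lipschitz_ibp (hPlip j) (hDcd j) (hDcs j) _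
      have hsymm : ∀ y, fderiv ℝ (D k) y (EuclideanSpace.single j 1)
          = fderiv ℝ (D j) y (EuclideanSpace.single k 1) := by
        intro y
        simp only [hD_def]
        exact snd_deriv_symm hφ y _ _
      rw [hI1, hI2]
      congr 1
      apply integral_congr_ae
      filter_upwards with y
      rw [hsymm y]
    rw [Finset.sum_congr rfl (fun j _ => hterm j)]
    ring
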